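/- For the CSS code Q with H_Z = [I_n | I_n] and H_X = [Ĥ | Ĥ], where ker(Ĥ) is a classical [n, k, d] code: the quantum code Q has dimension k, Z-distance d, and X-distance 2. -/

import Mathlib

/-!
Write `J = [I | I]`, so that `H_Z = J` and `H_X = Ĥ J`. Over `𝔽₂` the image of `Jᵀ c = (c, c)` is
exactly `ker J`, and `J (a, b) = a + b` is onto with the section `c ↦ (c, 0)`. Hence
`ker H_X = J⁻¹ (ker Ĥ)` and `ker H_X / im H_Zᵀ ≅ ker Ĥ`; since `J` does not increase weights and
`c ↦ (c, 0)` preserves them, the Z-distance is that of `ker Ĥ`. An X-logical operator is `(a, a)`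
with `a ∉ im Ĥᵀ`, of weight `2 |a|`, and a unit vector `eᵢ` with `cᵢ ≠ 0` for a codeword `c` of
`ker Ĥ` is such an `a`, as it is not orthogonal to `c`.
-/

open Matrix

def isMinWt {Q : Type*} [Fintype Q] (S : Set (Q → ZMod 2)) (d : ℕ) : Prop :=
  (∀ v ∈ S, d ≤ hammingNorm v) ∧ ∃ v ∈ S, hammingNorm v = d

section Hamming

variable {ι κ R : Type*} [Fintype ι] [Fintype κ] [DecidableEq R]

lemma hammingNorm_add_le [AddMonoid R] (a b : ι → R) :
    hammingNorm (a + b) ≤ hammingNorm a + hammingNorm b := by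
  classical
  refine (Finset.card_le_card fun i => ?_).trans (Finset.card_union_le _ _)
  contrapose!
  simp_all

lemma hammingNorm_sumElim [Zero R] (a : ι → R) (b : κ → R) :
    hammingNorm (Sum.elim a b) = hammingNorm a + hammingNorm b := by
  simp only [hammingNorm, Finset.card_filter, Fintype.sum_sum_type, Sum.elim_inl, Sum.elim_inr]
  congr

lemma hammingNorm_eq_add_comp_inl_inr [Zero R] (v : ι ⊕ κ → R) :
    hammingNorm v = hammingNorm (v ∘ Sum.inl) + hammingNorm (v ∘ Sum.inr) := by
  rw [← hammingNorm_sumElim, Sum.elim_comp_inl_inr]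

lemma hammingNorm_single [Zero R] [DecidableEq ι] (i : ι) {x : R} (hx : x ≠ 0) :
    hammingNorm (Pi.single i x : ι → R) = 1 := by
  simp [hammingNorm, Pi.single_apply, hx, Finset.filter_eq']

end Hamming

lemma isMinWt_of_dominated {Q Q' : Type*} [Fintype Q] [Fintype Q'] {S : Set (Q → ZMod 2)}
    {T : Set (Q' → ZMod 2)} {d : ℕ} (hT : isMinWt T d)
    (hST : ∀ v ∈ S, ∃ w ∈ T, hammingNorm w ≤ hammingNorm v)
    (hTS : ∀ w ∈ T, ∃ v ∈ S, hammingNorm v ≤ hammingNorm w) : isMinWt S d := by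
  refine ⟨fun v hv => ?_, ?_⟩
  · obtain ⟨w, hw, hwv⟩ := hST v hv
    exact (hT.1 w hw).trans hwv
  · obtain ⟨w, hw, rfl⟩ := hT.2
    obtain ⟨v, hv, hvw⟩ := hTS w hw
    obtain ⟨w', hw', hw'v⟩ := hST v hv
    exact ⟨v, hv, hvw.antisymm ((hT.1 w' hw').trans hw'v)⟩

lemma finrank_quotient_comap_ker_of_surjective {R M N : Type*} [Ring R] [AddCommGroup M]
    [Module R M] [AddCommGroup N] [Module R N] {f : M →ₗ[R] N} (hf : Function.Surjective f)
    (P : Submodule R N) :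
    Module.finrank R (P.comap f ⧸ (LinearMap.ker f).comap (P.comap f).subtype) =
      Module.finrank R P := by
  set g : P.comap f →ₗ[R] P := f.restrict fun _ hx => hx
  have hg : Function.Surjective g := by
    rintro ⟨p, -⟩
    obtain ⟨x, rfl⟩ := hf p
    exact ⟨⟨x, by simpa⟩, rfl⟩
  have hker : LinearMap.ker g = (LinearMap.ker f).comap (P.comap f).subtype := by
    ext x
    simp [g, Subtype.ext_iff]
  rw [← hker, (g.quotKerEquivOfSurjective hg).finrank_eq]

lemma single_one_notMem_range_transpose_mulVec {ι κ R : Type*} [Fintype ι] [Fintype κ]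
    [DecidableEq ι] [CommSemiring R] {A : Matrix κ ι R} {v : ι → R} (hv : A *ᵥ v = 0) {i : ι}
    (hi : v i ≠ 0) : Pi.single i 1 ∉ Set.range Aᵀ.mulVec := by
  rintro ⟨u, hu⟩
  have h := dotProduct_mulVec u A v
  rw [hv, dotProduct_zero, ← mulVec_transpose, hu, single_one_dotProduct] at h
  exact hi h.symm

section FromColsOneOne

variable {ι κ R : Type*} [Fintype ι] [DecidableEq ι]

lemma fromCols_one_one_mulVec [Semiring R] (v : ι ⊕ ι → R) :
    fromCols (1 : Matrix ι ι R) (1 : Matrix ι ι R) *ᵥ v = v ∘ Sum.inl + v ∘ Sum.inr := by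
  simp [fromCols_mulVec]

lemma fromCols_one_one_mulVec_sumElim_zero [Semiring R] (c : ι → R) :
    fromCols (1 : Matrix ι ι R) (1 : Matrix ι ι R) *ᵥ Sum.elim c 0 = c := by
  simp

lemma transpose_fromCols_one_one_mulVec [Semiring R] (c : ι → R) :
    (fromCols (1 : Matrix ι ι R) (1 : Matrix ι ι R))ᵀ *ᵥ c = Sum.elim c c := by
  rw [transpose_fromCols, fromRows_mulVec, transpose_one, one_mulVec]

lemma transpose_fromCols_self_mulVec [Fintype κ] [Semiring R] (A : Matrix κ ι R)
    (u : κ → R) :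
    (fromCols A A)ᵀ *ᵥ u = (fromCols (1 : Matrix ι ι R) (1 : Matrix ι ι R))ᵀ *ᵥ (Aᵀ *ᵥ u) := by
  rw [transpose_fromCols, fromRows_mulVec, transpose_fromCols_one_one_mulVec]

lemma fromCols_self_mulVec [Fintype κ] [Semiring R] (A : Matrix κ ι R) (v : ι ⊕ ι → R) :
    fromCols A A *ᵥ v = A *ᵥ (fromCols (1 : Matrix ι ι R) (1 : Matrix ι ι R) *ᵥ v) := by
  rw [mulVec_mulVec, mul_fromCols, Matrix.mul_one]

lemma fromCols_one_one_mulVecLin_surjective [CommSemiring R] :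
    Function.Surjective (fromCols (1 : Matrix ι ι R) (1 : Matrix ι ι R)).mulVecLin :=
  fun c => ⟨Sum.elim c 0, fromCols_one_one_mulVec_sumElim_zero c⟩

lemma ker_fromCols_self [Fintype κ] [CommSemiring R] (A : Matrix κ ι R) :
    LinearMap.ker (fromCols A A).mulVecLin =
      (LinearMap.ker A.mulVecLin).comap
        (fromCols (1 : Matrix ι ι R) (1 : Matrix ι ι R)).mulVecLin := by
  rw [← LinearMap.ker_comp, ← mulVecLin_mul, mul_fromCols, Matrix.mul_one]

lemma transpose_fromCols_one_one_mulVec_injective [Semiring R] :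
    Function.Injective (fromCols (1 : Matrix ι ι R) (1 : Matrix ι ι R))ᵀ.mulVec := fun a b h => by
  simpa [transpose_fromCols_one_one_mulVec] using congrArg (· ∘ Sum.inl) h

lemma mem_range_transpose_fromCols_one_one_mulVec [Ring R] [CharP R 2] {v : ι ⊕ ι → R} :
    v ∈ Set.range (fromCols (1 : Matrix ι ι R) (1 : Matrix ι ι R))ᵀ.mulVec ↔
      fromCols (1 : Matrix ι ι R) (1 : Matrix ι ι R) *ᵥ v = 0 := by
  simp only [Set.mem_range, transpose_fromCols_one_one_mulVec, fromCols_one_one_mulVec]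
  constructor
  · rintro ⟨c, rfl⟩
    ext i
    simp [CharTwo.add_self_eq_zero]
  · intro h
    refine ⟨v ∘ Sum.inl, ?_⟩
    ext (i | i)
    · rfl
    · exact CharTwo.add_eq_zero.mp (congrFun h i)

lemma range_transpose_fromCols_one_one_mulVecLin [CommRing R] [CharP R 2] :
    LinearMap.range (fromCols (1 : Matrix ι ι R) (1 : Matrix ι ι R))ᵀ.mulVecLin =
      LinearMap.ker (fromCols (1 : Matrix ι ι R) (1 : Matrix ι ι R)).mulVecLin := by
  ext v
  exact mem_range_transpose_fromCols_one_one_mulVec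

variable [DecidableEq R]

lemma hammingNorm_fromCols_one_one_mulVec_le [Semiring R] (v : ι ⊕ ι → R) :
    hammingNorm (fromCols (1 : Matrix ι ι R) (1 : Matrix ι ι R) *ᵥ v) ≤ hammingNorm v := by
  rw [fromCols_one_one_mulVec, hammingNorm_eq_add_comp_inl_inr v]
  exact hammingNorm_add_le _ _

lemma hammingNorm_transpose_fromCols_one_one_mulVec [Semiring R] (c : ι → R) :
    hammingNorm ((fromCols (1 : Matrix ι ι R) (1 : Matrix ι ι R))ᵀ *ᵥ c) = 2 * hammingNorm c := by
  rw [transpose_fromCols_one_one_mulVec, hammingNorm_sumElim, two_mul]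

end FromColsOneOne

section CSS

variable {ι κ : Type*} [Fintype ι] [DecidableEq ι] [Fintype κ]

lemma isMinWt_ker_fromCols_self_diff_range (A : Matrix κ ι (ZMod 2)) {d : ℕ}
    (hd : isMinWt {c | A *ᵥ c = 0 ∧ c ≠ 0} d) :
    isMinWt {v | fromCols A A *ᵥ v = 0 ∧
      v ∉ Set.range (fromCols (1 : Matrix ι ι (ZMod 2)) (1 : Matrix ι ι (ZMod 2)))ᵀ.mulVec} d := by
  refine isMinWt_of_dominated hd (fun v ⟨hv, hvr⟩ => ?_) (fun c ⟨hc, hc0⟩ => ?_)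
  · refine ⟨_, ⟨?_, ?_⟩, hammingNorm_fromCols_one_one_mulVec_le v⟩
    · rwa [← fromCols_self_mulVec]
    · exact mt mem_range_transpose_fromCols_one_one_mulVec.mpr hvr
  · refine ⟨Sum.elim c 0, ⟨?_, ?_⟩, ?_⟩
    · rwa [fromCols_self_mulVec, fromCols_one_one_mulVec_sumElim_zero]
    · rwa [mem_range_transpose_fromCols_one_one_mulVec, fromCols_one_one_mulVec_sumElim_zero]
    · rw [hammingNorm_sumElim, hammingNorm_zero, add_zero]

lemma isMinWt_ker_fromCols_one_one_diff_range (A : Matrix κ ι (ZMod 2)) {c : ι → ZMod 2}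
    (hc : A *ᵥ c = 0) (hc0 : c ≠ 0) :
    isMinWt {v | fromCols (1 : Matrix ι ι (ZMod 2)) (1 : Matrix ι ι (ZMod 2)) *ᵥ v = 0 ∧
      v ∉ Set.range (fromCols A A)ᵀ.mulVec} 2 := by
  constructor
  · rintro v ⟨hv, hvr⟩
    obtain ⟨a, rfl⟩ := mem_range_transpose_fromCols_one_one_mulVec.mpr hv
    have ha : a ≠ 0 := by
      rintro rfl
      exact hvr ⟨0, by simp⟩
    have := hammingNorm_pos_iff.mpr ha
    rw [hammingNorm_transpose_fromCols_one_one_mulVec]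
    omega
  · obtain ⟨i, hi⟩ : ∃ i, c i ≠ 0 := Function.ne_iff.mp hc0
    refine ⟨_, ⟨mem_range_transpose_fromCols_one_one_mulVec.mp ⟨Pi.single i 1, rfl⟩, ?_⟩,
      by rw [hammingNorm_transpose_fromCols_one_one_mulVec, hammingNorm_single i one_ne_zero]⟩
    rintro ⟨u, hu⟩
    rw [transpose_fromCols_self_mulVec] at hu
    exact single_one_notMem_range_transpose_mulVec hc hi
      ⟨u, transpose_fromCols_one_one_mulVec_injective hu⟩

end CSS

theorem stmt18_general (n m k d : ℕ) (Hhat : Matrix (Fin m) (Fin n) (ZMod 2))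
    (hk : Module.finrank (ZMod 2) (LinearMap.ker Hhat.mulVecLin) = k)
    (hd : isMinWt {v : Fin n → ZMod 2 | Hhat.mulVec v = 0 ∧ v ≠ 0} d)
    (HX : Matrix (Fin m) (Fin n ⊕ Fin n) (ZMod 2))
    (HZ : Matrix (Fin n) (Fin n ⊕ Fin n) (ZMod 2))
    (hHX : HX = Matrix.fromCols Hhat Hhat)
    (hHZ : HZ = Matrix.fromCols (1 : Matrix (Fin n) (Fin n) (ZMod 2))
      (1 : Matrix (Fin n) (Fin n) (ZMod 2))) :
    Module.finrank (ZMod 2)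
        (LinearMap.ker HX.mulVecLin ⧸
          (LinearMap.range HZ.transpose.mulVecLin).comap
            (LinearMap.ker HX.mulVecLin).subtype) = k ∧
      isMinWt {v : Fin n ⊕ Fin n → ZMod 2 |
          HX.mulVec v = 0 ∧ v ∉ Set.range HZ.transpose.mulVec} d ∧
      isMinWt {v : Fin n ⊕ Fin n → ZMod 2 |
          HZ.mulVec v = 0 ∧ v ∉ Set.range HX.transpose.mulVec} 2 := by
  subst hHX hHZ
  obtain ⟨c, ⟨hc, hc0⟩, -⟩ := hd.2
  refine ⟨?_, isMinWt_ker_fromCols_self_diff_range Hhat hd,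
    isMinWt_ker_fromCols_one_one_diff_range Hhat hc hc0⟩
  rw [ker_fromCols_self, range_transpose_fromCols_one_one_mulVecLin,
    finrank_quotient_comap_ker_of_surjective fromCols_one_one_mulVecLin_surjective, hk]

/-- For the CSS code `Q` with `H_Z = [I | I]` and `H_X = [Ĥ | Ĥ]`, where `ker Ĥ` is a
classical `[n, k, d]` code (`k ≥ 1`, `d ≥ 2`): the quantum code `Q` has dimension `k`
(as `dim(ker H_X / im H_Zᵀ)`), Z-distance `d`, and X-distance `2`. -/
theorem stmt18 (n m k d : ℕ) (Hhat : Matrix (Fin m) (Fin n) (ZMod 2))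
    (hk1 : 1 ≤ k) (hd2 : 2 ≤ d)
    (hk : Module.finrank (ZMod 2) (LinearMap.ker Hhat.mulVecLin) = k)
    (hd : isMinWt {v : Fin n → ZMod 2 | Hhat.mulVec v = 0 ∧ v ≠ 0} d)
    (HX : Matrix (Fin m) (Fin n ⊕ Fin n) (ZMod 2))
    (HZ : Matrix (Fin n) (Fin n ⊕ Fin n) (ZMod 2))
    (hHX : HX = Matrix.fromCols Hhat Hhat)
    (hHZ : HZ = Matrix.fromCols (1 : Matrix (Fin n) (Fin n) (ZMod 2))
      (1 : Matrix (Fin n) (Fin n) (ZMod 2))) :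
    Module.finrank (ZMod 2)
        (LinearMap.ker HX.mulVecLin ⧸
          (LinearMap.range HZ.transpose.mulVecLin).comap
            (LinearMap.ker HX.mulVecLin).subtype) = k ∧
      isMinWt {v : Fin n ⊕ Fin n → ZMod 2 |
          HX.mulVec v = 0 ∧ v ∉ Set.range HZ.transpose.mulVec} d ∧
      isMinWt {v : Fin n ⊕ Fin n → ZMod 2 |
          HZ.mulVec v = 0 ∧ v ∉ Set.range HX.transpose.mulVec} 2 :=
  stmt18_general n m k d Hhat hk hd HX HZ hHX hHZ
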